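/- arXiv:1407.0871 — 2 statements merged into one kernel-verified Lean document; each statement's English description precedes it below -/
import Mathlib

section
/- Let p_1, …, p_n be complex polynomials and ξ_1, …, ξ_n distinct real numbers, and suppose that for some M > 0 the function f(t) = p_1(t)·exp(i·ξ_1·t) + … + p_n(t)·exp(i·ξ_n·t) satisfies |f(t)| ≤ M for all t ∈ [0, ∞). Then each polynomial p_j is constant (has degree zero or is zero). -/
/-!
Induct on the total degree `∑ k, deg p_k`. Fix `h` for which the numbers `e_k = exp (i ξ_k h)` are
distinct. If some `p_j` is not constant, `f (t + h) - e_j f t` is again bounded and of the same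
form, with `p_k` replaced by `e_k p_k (· + h) - e_j p_k`: this keeps the degree of `p_k` for
`k ≠ j` (leading coefficient `(e_k - e_j) lc(p_k)`) and lowers that of `p_j`. By induction all `p_k`
with `k ≠ j` are constant, so `p_j (t) exp (i ξ_j t)` is bounded, hence so is `p_j` on `[0, ∞)`,
and `p_j` is constant after all.
-/

open Complex

noncomputable section

open Polynomial Filter Asymptotics Function

theorem norm_exp_I_mul_ofReal_mul_ofReal (a b : ℝ) : ‖exp (I * a * b)‖ = 1 := by
  rw [show I * a * b = ((a * b : ℝ) : ℂ) * I by push_cast; ring, norm_exp_ofReal_mul_I]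

theorem exists_injective_exp_I_mul {ι : Type*} [Countable ι] {ξ : ι → ℝ} (hξ : Injective ξ) :
    ∃ h : ℝ, Injective fun k => exp (I * ξ k * h) := by
  -- `exp (i ξ_k h) = exp (i ξ_l h)` with `k ≠ l` forces `h = 2πm / (ξ_k - ξ_l)` for some `m : ℤ`
  set bad : ι × ι × ℤ → ℝ := fun x => 2 * Real.pi * x.2.2 / (ξ x.1 - ξ x.2.1)
  obtain ⟨h, hh⟩ : ∃ h, h ∉ Set.range bad := by
    by_contra! hall
    exact Set.not_countable_univ (Set.eq_univ_of_forall hall ▸ Set.countable_range bad)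
  refine ⟨h, fun k l hkl => by_contra fun hne => hh ?_⟩
  obtain ⟨m, hm⟩ := exp_eq_exp_iff_exists_int.1 hkl
  have hm : (ξ k - ξ l) * h = 2 * Real.pi * m := by
    have him : ξ k * h = ξ l * h + m * (2 * Real.pi) := by simpa using congrArg im hm
    linarith
  have hsub : ξ k - ξ l ≠ 0 := sub_ne_zero.2 (hξ.ne hne)
  exact ⟨(k, l, m), by simp only [bad]; rw [div_eq_iff hsub]; linarith⟩

namespace Polynomial

variable {R : Type*} [CommRing R]

def twistedDiff (r a c : R) (p : R[X]) : R[X] := C a * taylor r p - C c * p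

theorem eval_twistedDiff (r a c s : R) (p : R[X]) :
    (twistedDiff r a c p).eval s = a * p.eval (s + r) - c * p.eval s := by
  simp [twistedDiff, taylor_eval]

theorem natDegree_twistedDiff_le (r a c : R) (p : R[X]) :
    (twistedDiff r a c p).natDegree ≤ p.natDegree :=
  (natDegree_sub_le _ _).trans <| max_le
    ((natDegree_C_mul_le _ _).trans (natDegree_taylor p r).le) (natDegree_C_mul_le _ _)

theorem coeff_twistedDiff_natDegree (r a c : R) (p : R[X]) :
    (twistedDiff r a c p).coeff p.natDegree = (a - c) * p.leadingCoeff := by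
  rw [twistedDiff, coeff_sub, coeff_C_mul, coeff_C_mul, coeff_taylor_natDegree, coeff_natDegree,
    sub_mul]

theorem natDegree_twistedDiff_self_lt (r c : R) {p : R[X]} (hp : p.natDegree ≠ 0) :
    (twistedDiff r c c p).natDegree < p.natDegree := by
  have := natDegree_le_pred (natDegree_twistedDiff_le r c c p)
    (by rw [coeff_twistedDiff_natDegree, sub_self, zero_mul])
  omega

theorem natDegree_twistedDiff_of_ne [IsDomain R] (r : R) {a c : R} (hac : a ≠ c) (p : R[X]) :
    (twistedDiff r a c p).natDegree = p.natDegree := by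
  rcases eq_or_ne p 0 with rfl | hp
  · simp [twistedDiff]
  · exact natDegree_eq_of_le_of_coeff_ne_zero (natDegree_twistedDiff_le r a c p) <| by
      rw [coeff_twistedDiff_natDegree]
      exact mul_ne_zero (sub_ne_zero.2 hac) (leadingCoeff_ne_zero.2 hp)

theorem natDegree_eq_zero_of_isBigO_one {p : ℂ[X]}
    (hp : (fun t : ℝ => p.eval (t : ℂ)) =O[atTop] fun _ => (1 : ℝ)) : p.natDegree = 0 := by
  by_contra hd
  refine not_isBoundedUnder_of_tendsto_atTop ?_ ((isBigO_one_iff ℝ).1 hp)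
  refine p.tendsto_norm_atTop (natDegree_pos_iff_degree_pos.1 (Nat.pos_of_ne_zero hd)) ?_
  simpa using tendsto_abs_atTop_atTop

end Polynomial

section ExpPoly

variable {ι : Type*} [Fintype ι]

def expPoly (p : ι → ℂ[X]) (ξ : ι → ℝ) (t : ℝ) : ℂ :=
  ∑ k, (p k).eval (t : ℂ) * exp (I * ξ k * t)

theorem expPoly_twistedDiff_apply (p : ι → ℂ[X]) (ξ : ι → ℝ) (h : ℝ) (c : ℂ) (t : ℝ) :
    expPoly (fun k => (p k).twistedDiff h (exp (I * ξ k * h)) c) ξ t =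
      expPoly p ξ (t + h) - c * expPoly p ξ t := by
  simp only [expPoly, eval_twistedDiff, Finset.mul_sum, ← Finset.sum_sub_distrib]
  refine Finset.sum_congr rfl fun k _ => ?_
  rw [ofReal_add, mul_add, exp_add]
  ring

theorem Asymptotics.IsBigO.expPoly_twistedDiff {p : ι → ℂ[X]} {ξ : ι → ℝ}
    (hf : expPoly p ξ =O[atTop] fun _ => (1 : ℝ)) (h : ℝ) (c : ℂ) :
    expPoly (fun k => (p k).twistedDiff h (exp (I * ξ k * h)) c) ξ =O[atTop] fun _ => (1 : ℝ) := by
  refine ((hf.comp_tendsto (tendsto_atTop_add_const_right _ h tendsto_id)).sub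
    (hf.const_mul_left c)).congr_left fun t => ?_
  exact (expPoly_twistedDiff_apply p ξ h c t).symm

theorem isBigO_eval_of_expPoly_isBigO [DecidableEq ι] {p : ι → ℂ[X]} {ξ : ι → ℝ}
    (hf : expPoly p ξ =O[atTop] fun _ => (1 : ℝ)) {j : ι}
    (hconst : ∀ k ≠ j, (p k).natDegree = 0) :
    (fun t : ℝ => (p j).eval (t : ℂ)) =O[atTop] fun _ => (1 : ℝ) := by
  have hterm :
      (fun t : ℝ => (p j).eval (t : ℂ) * exp (I * ξ j * t)) =O[atTop] fun _ => (1 : ℝ) := by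
    have hsplit : (fun t : ℝ => (p j).eval (t : ℂ) * exp (I * ξ j * t)) = fun t =>
        expPoly p ξ t - ∑ k ∈ Finset.univ.erase j, (p k).eval (t : ℂ) * exp (I * ξ k * t) := by
      ext t
      rw [expPoly, ← Finset.add_sum_erase _ _ (Finset.mem_univ j), add_sub_cancel_right]
    rw [hsplit]
    refine hf.sub (IsBigO.fun_sum fun k hk => ?_)
    rw [eq_C_of_natDegree_eq_zero (hconst k (Finset.ne_of_mem_erase hk))]
    refine (isBigO_one_iff ℝ).2 (isBoundedUnder_of ⟨‖(p k).coeff 0‖, fun t => ?_⟩)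
    simp [norm_exp_I_mul_ofReal_mul_ofReal]
  refine isBigO_norm_left.1 ((isBigO_norm_left.2 hterm).congr_left fun t => ?_)
  rw [norm_mul, norm_exp_I_mul_ofReal_mul_ofReal, mul_one]

theorem natDegree_eq_zero_of_expPoly_isBigO {p : ι → ℂ[X]} {ξ : ι → ℝ} (hξ : Injective ξ)
    (hf : expPoly p ξ =O[atTop] fun _ => (1 : ℝ)) (j : ι) : (p j).natDegree = 0 := by
  classical
  obtain ⟨h, he⟩ := exists_injective_exp_I_mul hξ
  induction hs : ∑ k, (p k).natDegree using Nat.strong_induction_on generalizing p j with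
  | _ s ih =>
  by_contra hj
  set q := fun k => (p k).twistedDiff (h : ℂ) (exp (I * ξ k * h)) (exp (I * ξ j * h))
  have hlt : ∑ k, (q k).natDegree < s := hs ▸ Finset.sum_lt_sum
    (fun k _ => natDegree_twistedDiff_le _ _ _ _)
    ⟨j, Finset.mem_univ j, natDegree_twistedDiff_self_lt _ _ hj⟩
  have hq : ∀ k, (q k).natDegree = 0 := fun k => ih _ hlt (hf.expPoly_twistedDiff h _) k rfl
  have hconst : ∀ k ≠ j, (p k).natDegree = 0 := fun k hk =>
    (natDegree_twistedDiff_of_ne _ (he.ne hk) _).symm.trans (hq k)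
  exact hj (natDegree_eq_zero_of_isBigO_one (isBigO_eval_of_expPoly_isBigO hf hconst))

end ExpPoly

theorem bounded_on_halfline_implies_constant_general (n : ℕ)
    (p : Fin n → Polynomial ℂ) (ξ : Fin n → ℝ) (hξ : Function.Injective ξ)
    (M : ℝ)
    (hbd : ∀ t : ℝ, 0 ≤ t →
      ‖∑ j, (p j).eval (t : ℂ) * Complex.exp (Complex.I * (ξ j : ℂ) * (t : ℂ))‖ ≤ M) :
    ∀ j, ∃ a : ℂ, p j = Polynomial.C a := by
  have hf : expPoly p ξ =O[atTop] fun _ => (1 : ℝ) :=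
    (isBigO_one_iff ℝ).2 ⟨M, eventually_map.2 ((eventually_ge_atTop 0).mono hbd)⟩
  intro j
  obtain ⟨a, ha⟩ := natDegree_eq_zero.1 (natDegree_eq_zero_of_expPoly_isBigO hξ hf j)
  exact ⟨a, ha.symm⟩

/-- If `f(t) = p₁(t) e^{i ξ₁ t} + … + p_n(t) e^{i ξ_n t}`, with `pⱼ ∈ ℂ[X]` and distinct
real `ξⱼ`, is bounded on `[0, ∞)`, then each `pⱼ` is constant. -/
theorem bounded_on_halfline_implies_constant (n : ℕ)
    (p : Fin n → Polynomial ℂ) (ξ : Fin n → ℝ) (hξ : Function.Injective ξ)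
    (M : ℝ) (hM : 0 < M)
    (hbd : ∀ t : ℝ, 0 ≤ t →
      ‖∑ j, (p j).eval (t : ℂ) * Complex.exp (Complex.I * (ξ j : ℂ) * (t : ℂ))‖ ≤ M) :
    ∀ j, ∃ a : ℂ, p j = Polynomial.C a :=
  bounded_on_halfline_implies_constant_general n p ξ hξ M hbd
end
end

section
/- The Krull dimension of the Bohl algebra B is infinite: for every n ∈ ℕ there exists a strictly increasing chain 𝔭_0 ⊂ 𝔭_1 ⊂ … ⊂ 𝔭_n of prime ideals of B of length n; equivalently, the Krull dimension of B equals ⊤ (infinity). -/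
open Complex

noncomputable section

/-- The Bohl algebra: the subalgebra of functions `ℝ → ℂ` (pointwise operations)
spanned over `ℂ` by the functions `t ↦ t^k * exp (λ * t)`, `k ∈ ℕ`, `λ ∈ ℂ`. -/
def Bohl : Subalgebra ℂ (ℝ → ℂ) :=
  Algebra.adjoin ℂ
    {g : ℝ → ℂ | ∃ (k : ℕ) (l : ℂ), g = fun t : ℝ => (t : ℂ) ^ k * Complex.exp (l * t)}

/-!
The functions `t ↦ t^k e^{λt}` are linearly independent, so `Bohl` is the monoid algebra
`ℂ[ℕ × ℂ]`. Independence holds because `t^k e^{λt}` is a generalized eigenvector of every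
translation `t ↦ t + s`, with eigenvalue `e^{λs}`, and distinct `λ` give distinct characters
`s ↦ e^{λs}`. Since `ℂ` is an infinite-dimensional `ℚ`-vector space, `ℂ[ℕ × ℂ]` surjects onto
`ℂ[ℕ →₀ ℚ]`, in which the kernels of the maps forgetting the coordinates below `j` form an
infinite strictly increasing chain of primes.
-/

open Polynomial Module.End

theorem Polynomial.degree_taylor_sub_lt {R : Type*} [CommRing R] {P : R[X]} (hP : P ≠ 0) (r : R) :
    (taylor r P - P).degree < P.degree :=
  degree_taylor P r ▸ degree_sub_lt_left (degree_taylor P r) ((taylor_eq_zero r P).not.mpr hP)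
    (leadingCoeff_taylor r P)

theorem linearIndependent_sigma_of_iSupIndep {R M η : Type*} {ιs : η → Type*} [Ring R]
    [AddCommGroup M] [Module R M] {W : η → Submodule R M} (hW : iSupIndep W)
    {f : ∀ j, ιs j → M} (hf : ∀ j, LinearIndependent R (f j)) (hfW : ∀ j i, f j i ∈ W j) :
    LinearIndependent R fun ji : Σ j, ιs j => f ji.1 ji.2 := by
  have hspan (j : η) : Submodule.span R (Set.range (f j)) ≤ W j :=
    Submodule.span_le.mpr (Set.range_subset_iff.mpr (hfW j))
  refine linearIndependent_iUnion_finite hf fun j t _ hjt => (hW j).mono (hspan j) ?_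
  exact iSup₂_le fun i hi => (hspan i).trans (le_iSup₂_of_le i (ne_of_mem_of_not_mem hi hjt) le_rfl)

theorem exists_linearMap_finsupp_nat_surjective {K V : Type*} [Field K] [AddCommGroup V]
    [Module K V] (hV : ¬ Module.Finite K V) : ∃ f : V →ₗ[K] (ℕ →₀ K), Function.Surjective f := by
  let b := Module.Basis.ofVectorSpace K V
  have : Infinite (Module.Basis.ofVectorSpaceIndex K V) := by
    by_contra h
    have := not_infinite_iff_finite.mp h
    exact hV (Module.Finite.of_basis b)
  let e := Infinite.natEmbedding (Module.Basis.ofVectorSpaceIndex K V)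
  exact ⟨Finsupp.lcomapDomain e e.injective ∘ₗ b.repr.toLinearMap,
    (Finsupp.comapDomain_surjective e.injective).comp b.repr.surjective⟩

theorem Complex.not_finite_rat : ¬ Module.Finite ℚ ℂ := by
  intro h
  have := (Module.finBasis ℚ ℂ).equivFun.injective.countable
  exact not_countable_complex Set.countable_univ

theorem Finsupp.filterAddHom_comp_of_imp {α M : Type*} [AddZeroClass M] {p q : α → Prop}
    [DecidablePred p] [DecidablePred q] (hqp : ∀ a, q a → p a) :
    (filterAddHom (M := M) q).comp (filterAddHom p) = filterAddHom q := by
  refine AddMonoidHom.ext fun f => Finsupp.ext fun a => ?_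
  simp only [AddMonoidHom.comp_apply, filterAddHom, AddMonoidHom.coe_mk, ZeroHom.coe_mk,
    filter_apply]
  grind

theorem AddMonoidAlgebra.mapDomain_surjective {R M N : Type*} [Semiring R] {f : M → N}
    (hf : Function.Surjective f) : Function.Surjective (mapDomain (R := R) f) := by
  intro y
  obtain ⟨c, hc⟩ := Finsupp.mapDomain_surjective hf y.coeff
  exact ⟨.ofCoeff c, by ext; simp [hc]⟩

section ForgetBelow

variable (k : Type*) [CommRing k]

def forgetBelow (j : ℕ) : AddMonoidAlgebra k (ℕ →₀ ℚ) →+* AddMonoidAlgebra k (ℕ →₀ ℚ) :=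
  AddMonoidAlgebra.mapDomainRingHom k (Finsupp.filterAddHom (j ≤ ·))

theorem ker_forgetBelow_le_succ (j : ℕ) :
    RingHom.ker (forgetBelow k j) ≤ RingHom.ker (forgetBelow k (j + 1)) := by
  have hcomp : forgetBelow k (j + 1) = (forgetBelow k (j + 1)).comp (forgetBelow k j) := by
    rw [forgetBelow, forgetBelow, ← AddMonoidAlgebra.mapDomainRingHom_comp,
      Finsupp.filterAddHom_comp_of_imp fun i (hi : j + 1 ≤ i) => (j.le_succ.trans hi)]
  intro x (hx : forgetBelow k j x = 0)
  rw [RingHom.mem_ker, hcomp, RingHom.comp_apply, hx, map_zero]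

theorem single_sub_one_mem_ker_forgetBelow_iff [Nontrivial k] (i j : ℕ) :
    AddMonoidAlgebra.single (Finsupp.single j (1 : ℚ)) (1 : k) - 1 ∈ RingHom.ker (forgetBelow k i) ↔
      j < i := by
  rw [RingHom.mem_ker, map_sub, map_one, sub_eq_zero, AddMonoidAlgebra.one_def, ← not_le]
  by_cases hij : i ≤ j <;>
    simp [forgetBelow, Finsupp.filterAddHom, AddMonoidAlgebra.single_left_inj one_ne_zero, hij]

theorem strictMono_ker_forgetBelow [Nontrivial k] :
    StrictMono fun j => RingHom.ker (forgetBelow k j) := by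
  refine strictMono_nat_of_lt_succ fun j => (ker_forgetBelow_le_succ k j).lt_of_ne fun h => ?_
  have hmem := (single_sub_one_mem_ker_forgetBelow_iff k (j + 1) j).mpr j.lt_succ_self
  rw [← h, single_sub_one_mem_ker_forgetBelow_iff] at hmem
  exact hmem.false

theorem ringKrullDim_addMonoidAlgebra_finsupp_rat_eq_top [IsDomain k] :
    ringKrullDim (AddMonoidAlgebra k (ℕ →₀ ℚ)) = ⊤ := by
  let P (j : ℕ) : PrimeSpectrum (AddMonoidAlgebra k (ℕ →₀ ℚ)) :=
    ⟨RingHom.ker (forgetBelow k j), RingHom.ker_isPrime _⟩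
  rw [ringKrullDim, eq_top_iff, ← Order.krullDim_nat]
  exact Order.krullDim_le_of_strictMono P fun i j hij => strictMono_ker_forgetBelow k hij

theorem ringKrullDim_addMonoidAlgebra_eq_top_of_surjective [IsDomain k] {M : Type*}
    [AddCommMonoid M] (f : M →+ (ℕ →₀ ℚ)) (hf : Function.Surjective f) : ringKrullDim (AddMonoidAlgebra k M) = ⊤ :=
  eq_top_iff.mpr <| ringKrullDim_addMonoidAlgebra_finsupp_rat_eq_top k ▸
    ringKrullDim_le_of_surjective (AddMonoidAlgebra.mapDomainRingHom k f)
      (AddMonoidAlgebra.mapDomain_surjective hf)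

end ForgetBelow

namespace Bohl

def expPoly (l : ℂ) : ℂ[X] →ₗ[ℂ] (ℝ → ℂ) where
  toFun P t := P.eval (t : ℂ) * exp (l * t)
  map_add' P Q := by ext; simp [add_mul]
  map_smul' c P := by ext; simp [mul_assoc]

theorem expPoly_injective (l : ℂ) : Function.Injective (expPoly l) := by
  refine (injective_iff_map_eq_zero _).mpr fun P hP => eq_zero_of_infinite_isRoot P ?_
  refine Set.infinite_of_injective_forall_mem ofReal_injective fun t => ?_
  simpa [expPoly, exp_ne_zero] using congrFun hP t

def shift (s : ℝ) : Module.End ℂ (ℝ → ℂ) := LinearMap.funLeft ℂ ℂ (· + s)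

theorem shift_commute (s r : ℝ) : Commute (shift s) (shift r) := by
  ext f t
  simp [shift, LinearMap.funLeft, add_right_comm]

theorem shift_sub_smul_expPoly (l : ℂ) (s : ℝ) (P : ℂ[X]) :
    (shift s - exp (l * s) • 1) (expPoly l P) = exp (l * s) • expPoly l (taylor (s : ℂ) P - P) := by
  ext t
  simp [shift, expPoly, LinearMap.funLeft, taylor_eval, mul_add, exp_add]
  ring

theorem expPoly_mem_maxGenEigenspace (l : ℂ) (s : ℝ) (P : ℂ[X]) :
    expPoly l P ∈ (shift s).maxGenEigenspace (exp (l * s)) := by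
  induction P using Polynomial.degree_lt_wf.induction with
  | _ P ih =>
  rcases eq_or_ne P 0 with rfl | hP
  · simp
  obtain ⟨k, hk⟩ := (mem_maxGenEigenspace _ _ _).mp
    (Submodule.smul_mem _ (exp (l * s)) (ih _ (degree_taylor_sub_lt hP s)))
  refine (mem_maxGenEigenspace _ _ _).mpr ⟨k + 1, ?_⟩
  rwa [pow_succ, Module.End.mul_apply, shift_sub_smul_expPoly]

theorem exp_mul_ofReal_injective : Function.Injective fun l : ℂ => fun s : ℝ => exp (l * s) := by
  intro l l' (h : (fun s : ℝ => exp (l * s)) = fun s : ℝ => exp (l' * s))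
  have hderiv (c : ℂ) : HasDerivAt (fun s : ℝ => exp (c * s)) c 0 := by
    simpa using ((hasDerivAt_id (0 : ℂ)).const_mul c).cexp.comp_ofReal
  exact (hderiv l).unique (h ▸ hderiv l')

theorem linearIndependent_monomials :
    LinearIndependent ℂ fun a : ℕ × ℂ => fun t : ℝ => (t : ℂ) ^ a.1 * exp (a.2 * t) := by
  let W (l : ℂ) : Submodule ℂ (ℝ → ℂ) := ⨅ s : ℝ, (shift s).maxGenEigenspace (exp (l * s))
  have hW : iSupIndep W :=
    (independent_iInf_maxGenEigenspace_of_forall_mapsTo shift fun s r μ =>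
      mapsTo_maxGenEigenspace_of_comm (shift_commute r s) μ).comp exp_mul_ofReal_injective
  have hsigma := linearIndependent_sigma_of_iSupIndep hW (f := fun l k => expPoly l (X ^ k))
    (fun l => by
      simpa [Function.comp_def, monomial_one_right_eq_X_pow] using
        (basisMonomials ℂ).linearIndependent.map' (expPoly l)
          (LinearMap.ker_eq_bot.mpr (expPoly_injective l)))
    (fun l k => Submodule.mem_iInf _ |>.mpr fun s => expPoly_mem_maxGenEigenspace l s _)
  have hcomp : (fun a : ℕ × ℂ => fun t : ℝ => (t : ℂ) ^ a.1 * exp (a.2 * t)) =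
      (fun ji : Σ _ : ℂ, ℕ => expPoly ji.1 (X ^ ji.2)) ∘ fun a => ⟨a.2, a.1⟩ := by
    funext a t
    simp [expPoly]
  rw [hcomp]
  exact hsigma.comp _ fun a b h => by cases a; cases b; cases h; rfl

def expMonomial : Multiplicative (ℕ × ℂ) →* (ℝ → ℂ) where
  toFun a t := (t : ℂ) ^ a.toAdd.1 * exp (a.toAdd.2 * t)
  map_one' := by funext t; simp
  map_mul' a b := by
    funext t
    simp only [toAdd_mul, Prod.fst_add, Prod.snd_add, Pi.mul_apply, pow_add, add_mul, exp_add]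
    ring

def ofMonoidAlgebra : AddMonoidAlgebra ℂ (ℕ × ℂ) →ₐ[ℂ] (ℝ → ℂ) :=
  AddMonoidAlgebra.lift ℂ (ℝ → ℂ) (ℕ × ℂ) expMonomial

theorem ofMonoidAlgebra_apply (x : AddMonoidAlgebra ℂ (ℕ × ℂ)) :
    ofMonoidAlgebra x =
      Finsupp.linearCombination ℂ (expMonomial ∘ Multiplicative.ofAdd) x.coeff := by
  rw [ofMonoidAlgebra, AddMonoidAlgebra.lift_apply, Finsupp.linearCombination_apply]
  rfl

theorem ofMonoidAlgebra_injective : Function.Injective ofMonoidAlgebra := by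
  refine (injective_iff_map_eq_zero _).mpr fun x hx => AddMonoidAlgebra.coeff_eq_zero.mp ?_
  exact linearIndependent_iff.mp linearIndependent_monomials x.coeff (ofMonoidAlgebra_apply x ▸ hx)

theorem range_ofMonoidAlgebra : ofMonoidAlgebra.range = Bohl := by
  apply le_antisymm
  · rintro _ ⟨x, rfl⟩
    change ofMonoidAlgebra x ∈ Bohl
    rw [ofMonoidAlgebra_apply, Finsupp.linearCombination_apply]
    exact sum_mem fun a _ =>
      Subalgebra.smul_mem _ (Algebra.subset_adjoin (Set.mem_ofPred.mpr ⟨a.1, a.2, rfl⟩)) _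
  · refine Algebra.adjoin_le ?_
    rintro _ ⟨k, l, rfl⟩
    exact ⟨AddMonoidAlgebra.single (k, l) 1, by simp [ofMonoidAlgebra, expMonomial]⟩

def equivMonoidAlgebra : AddMonoidAlgebra ℂ (ℕ × ℂ) ≃ₐ[ℂ] Bohl :=
  (AlgEquiv.ofInjective _ ofMonoidAlgebra_injective).trans
    (Subalgebra.equivOfEq _ _ range_ofMonoidAlgebra)

end Bohl

/-- The Krull dimension of the Bohl algebra is infinite. -/
theorem krullDim_Bohl_infinite : ringKrullDim Bohl = ⊤ := by
  obtain ⟨f, hf⟩ := exists_linearMap_finsupp_nat_surjective Complex.not_finite_rat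
  rw [← ringKrullDim_eq_of_ringEquiv Bohl.equivMonoidAlgebra.toRingEquiv]
  exact ringKrullDim_addMonoidAlgebra_eq_top_of_surjective ℂ (f.toAddMonoidHom.comp (.snd ℕ ℂ))
    (hf.comp Prod.snd_surjective)
end
end
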